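/- For each integer m ≥ 2, k ∈ ℝ, and 0 ≤ j ≤ 2m+2, consider the twisted complex (⋀^•(g_m^* ⊗ ℂ), d_k) of the Lie algebra g_m = ℝ ⋉_A ℝ^{2m+1} as above with the inner product making the monomial basis orthonormal. Let A^j_k be the span of the weight-k monomials in B^j and let Â^j_k be the span of the monomials γ ∈ B^j with W(γ) ≠ k and x^1∧γ ≠ 0. Then there is an orthogonal direct sum decomposition ⋀^j = A^j_k ⊕ x^1∧Â^{j−1}_k ⊕ Â^j_k, and moreover ker(Δ_k) ∩ ⋀^j = A^j_k, d_k(⋀^{j−1}) = x^1∧Â^{j−1}_k, and d_k^*(⋀^{j+1}) = Â^j_k, where Δ_k = d_k d_k^* + d_k^* d_k. -/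

import Mathlib

set_option synthInstance.maxHeartbeats 1000000
set_option maxHeartbeats 1000000

namespace SolvCE

/-- the complexified exterior algebra `⋀^•(g_m^* ⊗ ℂ)` of
`g_m = ℝ ⋉_A ℝ^{2m+1}` -/
abbrev Λg (m : ℕ) := ExteriorAlgebra ℂ ((Fin (m + 1) ⊕ Fin (m + 1)) → ℂ)

/-- the generator `x^{a+1}` (1-based: `x^1, …, x^{m+1}`) -/
noncomputable def x (m : ℕ) (a : Fin (m + 1)) : Λg m :=
  ExteriorAlgebra.ι ℂ (Pi.single (Sum.inl a) 1)

/-- the generator `y^{b+1}` (1-based: `y^1, …, y^{m+1}`) -/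
noncomputable def y (m : ℕ) (b : Fin (m + 1)) : Λg m :=
  ExteriorAlgebra.ι ℂ (Pi.single (Sum.inr b) 1)

/-- the weight of `x^{a+1}`: `W(x^1) = W(x^2) = 0`, `W(x^α) = -(α-2)` for
`α ≥ 3` -/
def wx (m : ℕ) (a : Fin (m + 1)) : ℝ :=
  if (a : ℕ) ≤ 1 then 0 else -(((a : ℕ) : ℝ) - 1)

/-- the weight of `y^{b+1}`: `W(y^1) = -m`, `W(y^β) = β - 1` for `β ≥ 2` -/
def wy (m : ℕ) (b : Fin (m + 1)) : ℝ :=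
  if (b : ℕ) = 0 then -(m : ℝ) else ((b : ℕ) : ℝ)

/-- the weight of a wedge monomial, extended additively -/
def W (m : ℕ) (as bs : List (Fin (m + 1))) : ℝ :=
  (as.map (wx m)).sum + (bs.map (wy m)).sum

/-- the wedge monomial `x^{α₁} ∧ ⋯ ∧ x^{αₚ} ∧ y^{β₁} ∧ ⋯ ∧ y^{β_q}` -/
noncomputable def mono (m : ℕ) (as bs : List (Fin (m + 1))) : Λg m :=
  (as.map (x m)).prod * (bs.map (y m)).prod

/-- the space `⋀^j` of `j`-forms, the span of the degree-`j` monomials of the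
monomial basis `B^j` -/
noncomputable def deg (m : ℕ) (j : ℤ) : Submodule ℂ (Λg m) :=
  Submodule.span ℂ {γ | ∃ as bs : List (Fin (m + 1)),
    as.Pairwise (· < ·) ∧ bs.Pairwise (· < ·) ∧
    ((as.length : ℤ) + bs.length = j) ∧ γ = mono m as bs}

/-- the space `A^j_k`, the span of the weight-`k` monomials in `B^j` -/
noncomputable def Aw (m : ℕ) (j : ℤ) (k : ℝ) : Submodule ℂ (Λg m) :=
  Submodule.span ℂ {γ | ∃ as bs : List (Fin (m + 1)),
    as.Pairwise (· < ·) ∧ bs.Pairwise (· < ·) ∧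
    ((as.length : ℤ) + bs.length = j) ∧ W m as bs = k ∧ γ = mono m as bs}

/-- the space `Â^j_k`, the span of the monomials `γ ∈ B^j` with `W(γ) ≠ k`
and `x^1 ∧ γ ≠ 0` -/
noncomputable def Ahat (m : ℕ) (j : ℤ) (k : ℝ) : Submodule ℂ (Λg m) :=
  Submodule.span ℂ {γ | ∃ as bs : List (Fin (m + 1)),
    as.Pairwise (· < ·) ∧ bs.Pairwise (· < ·) ∧
    ((as.length : ℤ) + bs.length = j) ∧ W m as bs ≠ k ∧
    x m 0 * mono m as bs ≠ 0 ∧ γ = mono m as bs}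

end SolvCE

/-!
Every monomial `γ` satisfies `d_k γ = ((W(γ) - k)/m) x^1 ∧ γ`: this holds for the generators
by the structure equations, and propagates to products because `d` is an antiderivation and
`x^1` anticommutes with every generator. Since the monomials form an orthonormal basis and the
coefficient is real, `d_k^*` removes a leading `x^1` with the same coefficient and kills monomials
without `x^1`, so `Δ_k γ = ((W(γ) - k)/m)^2 γ`. Hence `⋀^j` splits along a partition of its
basis monomials: weight `k`; weight `≠ k` with `x^1`; weight `≠ k` without `x^1`. This gives
the orthogonal direct sum, the kernel of `Δ_k`, and the images of `d_k` and `d_k^*`.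
-/

open Module Set Submodule

section Anticommuting

variable {α A : Type*} [LinearOrder α] [Ring A]

theorem mul_list_prod_of_anticomm {a : A} :
    ∀ l : List A, (∀ y ∈ l, a * y = -(y * a)) →
      a * l.prod = ((-1 : ℤ) ^ l.length) • (l.prod * a)
  | [], _ => by simp
  | y :: l, h => by
    rw [List.prod_cons, ← mul_assoc, h y (by simp), neg_mul, mul_assoc,
      mul_list_prod_of_anticomm l (fun z hz => h z (by simp [hz])), mul_smul_comm, ← mul_assoc,
      List.length_cons, pow_succ', mul_smul, neg_one_smul]

theorem exists_mul_list_prod_eq_zsmul_of_anticomm (f : α → A) (hsq : ∀ a, f a * f a = 0)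
    (hanti : ∀ a b, f a * f b = -(f b * f a)) (a : α) :
    ∀ {l : List α}, l.Pairwise (· < ·) → ∃ (c : ℤ) (l' : List α),
      l'.Pairwise (· < ·) ∧ l' ⊆ a :: l ∧ f a * (l.map f).prod = c • (l'.map f).prod
  | [], _ => ⟨1, [a], List.pairwise_singleton _ a, by simp, by simp⟩
  | b :: l, hl => by
    obtain ⟨hb, hl⟩ := List.pairwise_cons.1 hl
    rcases lt_trichotomy a b with hab | rfl | hba
    · refine ⟨1, a :: b :: l, ?_, by simp, by simp⟩
      exact List.pairwise_cons.2 ⟨by simpa using ⟨hab, fun c hc => hab.trans (hb c hc)⟩,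
        List.pairwise_cons.2 ⟨hb, hl⟩⟩
    · exact ⟨0, [], .nil, by simp, by simp [← mul_assoc, hsq]⟩
    · obtain ⟨c, l', hl', hsub, heq⟩ :=
        exists_mul_list_prod_eq_zsmul_of_anticomm f hsq hanti a hl
      have hgt : ∀ c ∈ l', b < c := fun c hc => by
        rcases List.mem_cons.1 (hsub hc) with rfl | hc
        exacts [hba, hb c hc]
      refine ⟨-c, b :: l', List.pairwise_cons.2 ⟨hgt, hl'⟩, ?_, ?_⟩
      · exact List.cons_subset.2
          ⟨by simp, List.Subset.trans hsub (List.cons_subset_cons _ (by simp))⟩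
      · rw [List.map_cons, List.prod_cons, ← mul_assoc, hanti, neg_mul, mul_assoc, heq,
          List.map_cons, List.prod_cons, mul_smul_comm, neg_smul]

end Anticommuting

namespace ExteriorAlgebra

variable {R M : Type*} [CommRing R] [AddCommGroup M] [Module R M]

theorem ι_mul_ι_anticomm (v w : M) : ι R v * ι R w = -(ι R w * ι R v) :=
  eq_neg_of_add_eq_zero_left (ι_add_mul_swap v w)

theorem antiderivation_list_prod {κ : Type*}
    (d : ExteriorAlgebra R M →ₗ[R] ExteriorAlgebra R M) (hd1 : d 1 = 0)
    (hleib : ∀ v b, d (ι R v * b) = d (ι R v) * b - ι R v * d b) (θ : M) (e : κ → M)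
    (w : κ → R) (he : ∀ i, d (ι R (e i)) = w i • (ι R θ * ι R (e i))) (l : List κ) :
    d (l.map (ι R ∘ e)).prod = (l.map w).sum • (ι R θ * (l.map (ι R ∘ e)).prod) := by
  induction l with
  | nil => simp [hd1]
  | cons i l ih =>
    simp only [List.map_cons, List.prod_cons, List.sum_cons, Function.comp_apply]
    rw [hleib, he, ih, smul_mul_assoc, mul_smul_comm, ← mul_assoc (ι R (e i)),
      ι_mul_ι_anticomm (e i) θ, add_smul]
    simp only [neg_mul, smul_neg, sub_neg_eq_add, mul_assoc]

end ExteriorAlgebra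

namespace Submodule

variable {ι K M : Type*}

theorem span_image_ne_zero [Semiring K] [AddCommMonoid M] [Module K M] (v : ι → M) (s : Set ι) :
    span K (v '' {i | i ∈ s ∧ v i ≠ 0}) = span K (v '' s) := by
  rw [← span_sdiff_singleton_zero (s := v '' s), ← image_sdiff_preimage]
  rfl

theorem span_image_smul_eq [DivisionRing K] [AddCommGroup M] [Module K M] (c : ι → K)
    (v : ι → M) (s : Set ι) :
    span K ((fun i => c i • v i) '' s) = span K (v '' {i | i ∈ s ∧ c i ≠ 0}) := by
  apply le_antisymm <;> rw [span_le] <;> rintro _ ⟨i, hi, rfl⟩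
  · by_cases hc : c i = 0
    · simp [hc]
    · exact smul_mem _ _ (subset_span ⟨i, ⟨hi, hc⟩, rfl⟩)
  · rw [SetLike.mem_coe, ← inv_smul_smul₀ hi.2 (v i)]
    exact smul_mem _ _ (subset_span ⟨i, hi.1, rfl⟩)

end Submodule

theorem LinearMap.apply_eq_zero_of_mem_span {R S M N P : Type*} [CommSemiring R] [CommSemiring S]
    [AddCommMonoid M] [AddCommMonoid N] [AddCommMonoid P] [Module R M] [Module S N] [Module S P]
    {σ : R →+* S} (B : M →ₛₗ[σ] N →ₗ[S] P) {s : Set M} {t : Set N}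
    (h : ∀ x ∈ s, ∀ y ∈ t, B x y = 0) :
    ∀ x ∈ span R s, ∀ y ∈ span S t, B x y = 0 := by
  have hs : ∀ y ∈ t, span R s ≤ ker (B.flip y) := fun y hy =>
    span_le.2 fun x hx => h x hx y hy
  exact fun x hx y hy => (span_le (p := ker (B x))).2 (fun y' hy' => hs y' hy' hx) hy

namespace Module.Basis

variable {ι K M : Type*} [AddCommGroup M]

theorem ext_of_orthonormal [DecidableEq ι] [CommRing K] [StarRing K] [Module K M]
    (b : Basis ι K M) (B : M →ₗ⋆[K] M →ₗ[K] K)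
    (hB : ∀ i j, B (b i) (b j) = if i = j then 1 else 0) {u v : M}
    (h : ∀ j, B u (b j) = B v (b j)) : u = v := by
  have hrepr : ∀ u j, B u (b j) = star (b.repr u j) := by
    intro u j
    induction b.mem_span u using span_induction with
    | mem _ hx => obtain ⟨i, rfl⟩ := hx; simp [hB, Finsupp.single_apply, apply_ite star]
    | zero => simp
    | add _ _ _ _ h₁ h₂ => simp [h₁, h₂]
    | smul c _ _ h => simp [h, starRingEnd_apply]
  exact b.ext_elem fun j => star_injective (by rw [← hrepr, ← hrepr, h])

theorem ker_inf_span_image_of_apply_eq_smul [CommRing K] [NoZeroDivisors K] [Module K M]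
    (b : Basis ι K M) {f : M →ₗ[K] M} (μ : ι → K) (hf : ∀ i, f (b i) = μ i • b i)
    (s : Set ι) :
    LinearMap.ker f ⊓ span K (b '' s) = span K (b '' {i | i ∈ s ∧ μ i = 0}) := by
  have hrepr : ∀ u i, b.repr (f u) i = μ i * b.repr u i := by
    intro u i
    have : b.coord i ∘ₗ f = μ i • b.coord i := b.ext fun j => by
      by_cases hij : j = i <;> simp [hf, hij]
    simpa using LinearMap.congr_fun this u
  ext u
  simp only [mem_inf, LinearMap.mem_ker, b.mem_span_image, b.ext_elem_iff (x := f u),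
    hrepr, map_zero, Finsupp.coe_zero, Pi.zero_apply, mul_eq_zero]
  constructor
  · rintro ⟨hμ, hs⟩ i hi
    exact ⟨hs hi, (hμ i).resolve_right (Finsupp.mem_support_iff.1 hi)⟩
  · intro h
    refine ⟨fun i => ?_, fun i hi => (h hi).1⟩
    by_cases hi : b.repr u i = 0
    exacts [Or.inr hi, Or.inl (h (Finsupp.mem_support_iff.2 hi)).2]

end Module.Basis

namespace SolvCE

open ExteriorAlgebra (ι_sq_zero ι_mul_ι_anticomm antiderivation_list_prod)

variable {m : ℕ}

theorem mono_cons (a : Fin (m + 1)) (as bs : List (Fin (m + 1))) :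
    mono m (a :: as) bs = x m a * mono m as bs := by
  simp [mono, mul_assoc]

theorem pairwise_cons_zero_iff {as : List (Fin (m + 1))} :
    (0 :: as).Pairwise (· < ·) ↔ 0 ∉ as ∧ as.Pairwise (· < ·) := by
  simp only [List.pairwise_cons, Fin.pos_iff_ne_zero, and_congr_left_iff]
  exact fun _ => ⟨fun h h0 => h 0 h0 rfl, fun h a ha ha0 => h (ha0 ▸ ha)⟩

theorem eq_zero_cons_of_zero_mem {as : List (Fin (m + 1))} (hs : as.Pairwise (· < ·))
    (h : 0 ∈ as) : as = 0 :: as.tail := by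
  cases as with
  | nil => simp at h
  | cons a t =>
    obtain rfl | h := List.mem_cons.1 h
    · rfl
    · exact absurd ((List.pairwise_cons.1 hs).1 0 h) (Fin.not_lt_zero a)

theorem W_cons_zero (as bs : List (Fin (m + 1))) : W m (0 :: as) bs = W m as bs := by
  simp [W, wx]

/-! ### The monomial basis -/

abbrev MonoIndex (m : ℕ) :=
  {p : List (Fin (m + 1)) × List (Fin (m + 1)) //
    p.1.Pairwise (· < ·) ∧ p.2.Pairwise (· < ·)}

noncomputable def monoFamily (m : ℕ) (i : MonoIndex m) : Λg m := mono m i.1.1 i.1.2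

namespace MonoIndex

def degree (i : MonoIndex m) : ℤ := (i.1.1.length : ℤ) + i.1.2.length

def weight (i : MonoIndex m) : ℝ := W m i.1.1 i.1.2

/-- `x^1 ∧ γ` for a monomial `γ` without `x^1` (index `0` is `x^1`) -/
def consZero (i : MonoIndex m) (h : 0 ∉ i.1.1) : MonoIndex m :=
  ⟨(0 :: i.1.1, i.1.2), pairwise_cons_zero_iff.2 ⟨h, i.2.1⟩, i.2.2⟩

theorem degree_consZero (i : MonoIndex m) (h : 0 ∉ i.1.1) :
    (i.consZero h).degree = i.degree + 1 := by
  simp [consZero, degree]; ring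

theorem weight_consZero (i : MonoIndex m) (h : 0 ∉ i.1.1) :
    (i.consZero h).weight = i.weight :=
  W_cons_zero _ _

theorem consZero_inj {i j : MonoIndex m} {hi : 0 ∉ i.1.1} {hj : 0 ∉ j.1.1} :
    i.consZero hi = j.consZero hj ↔ i = j := by
  simp [consZero, Subtype.ext_iff, Prod.ext_iff]

theorem exists_consZero_eq (i : MonoIndex m) (h : 0 ∈ i.1.1) :
    ∃ (i' : MonoIndex m) (h' : 0 ∉ i'.1.1), i'.consZero h' = i := by
  obtain ⟨⟨as, bs⟩, has, hbs⟩ := i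
  have hcons := eq_zero_cons_of_zero_mem has h
  rw [hcons, pairwise_cons_zero_iff] at has
  exact ⟨⟨(as.tail, bs), has.2, hbs⟩, has.1, Subtype.ext (Prod.ext hcons.symm rfl)⟩

end MonoIndex

theorem x_zero_mul_monoFamily (i : MonoIndex m) :
    x m 0 * monoFamily m i = if h : 0 ∈ i.1.1 then 0 else monoFamily m (i.consZero h) := by
  split_ifs with h
  · obtain ⟨i', h', rfl⟩ := i.exists_consZero_eq h
    simp [MonoIndex.consZero, monoFamily, mono_cons, ← mul_assoc, x]
  · simp [MonoIndex.consZero, monoFamily, mono_cons]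

theorem x_mul_monoFamily_mem_span (a : Fin (m + 1)) (i : MonoIndex m) :
    x m a * monoFamily m i ∈ span ℂ (range (monoFamily m)) := by
  obtain ⟨⟨as, bs⟩, has, hbs⟩ := i
  obtain ⟨c, as', has', -, h⟩ := exists_mul_list_prod_eq_zsmul_of_anticomm (x m)
    (fun _ => ι_sq_zero _) (fun _ _ => ι_mul_ι_anticomm _ _) a has
  rw [monoFamily, mono, ← mul_assoc, h, smul_mul_assoc]
  exact zsmul_mem (subset_span (mem_range_self (f := monoFamily m) ⟨(as', bs), has', hbs⟩)) c

theorem y_mul_monoFamily_mem_span (b : Fin (m + 1)) (i : MonoIndex m) :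
    y m b * monoFamily m i ∈ span ℂ (range (monoFamily m)) := by
  obtain ⟨⟨as, bs⟩, has, hbs⟩ := i
  obtain ⟨c, bs', hbs', -, h⟩ := exists_mul_list_prod_eq_zsmul_of_anticomm (y m)
    (fun _ => ι_sq_zero _) (fun _ _ => ι_mul_ι_anticomm _ _) b hbs
  have hy : y m b * (as.map (x m)).prod
      = ((-1 : ℤ) ^ as.length) • ((as.map (x m)).prod * y m b) := by
    simpa using mul_list_prod_of_anticomm (as.map (x m)) (by
      simp only [List.mem_map]
      rintro _ ⟨a, -, rfl⟩
      exact ι_mul_ι_anticomm _ _)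
  rw [monoFamily, mono, ← mul_assoc, hy, smul_mul_assoc, mul_assoc, h, mul_smul_comm, smul_smul]
  exact zsmul_mem (subset_span (mem_range_self (f := monoFamily m) ⟨(as, bs'), has, hbs'⟩)) _

theorem mul_mem_span_monoFamily {g : Λg m}
    (hg : ∀ i, g * monoFamily m i ∈ span ℂ (range (monoFamily m))) {u : Λg m}
    (hu : u ∈ span ℂ (range (monoFamily m))) :
    g * u ∈ span ℂ (range (monoFamily m)) :=
  (span_le (p := (span ℂ (range (monoFamily m))).comap (LinearMap.mulLeft ℂ g))).2
    (by rintro _ ⟨i, rfl⟩; exact hg i) hu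

theorem span_range_monoFamily : span ℂ (range (monoFamily m)) = ⊤ := by
  set S := span ℂ (range (monoFamily m))
  have hι : ∀ v, ∀ u ∈ S, ExteriorAlgebra.ι ℂ v * u ∈ S := by
    intro v u hu
    rw [← Finset.univ_sum_single v, map_sum, Finset.sum_mul]
    refine sum_mem fun i _ => ?_
    have hsingle : Pi.single i (v i) = v i • (Pi.single i 1 : _ → ℂ) := by
      rw [← Pi.single_smul', smul_eq_mul, mul_one]
    rw [hsingle, map_smul, smul_mul_assoc]
    refine smul_mem _ _ (mul_mem_span_monoFamily ?_ hu)
    cases i with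
    | inl a => exact x_mul_monoFamily_mem_span a
    | inr b => exact y_mul_monoFamily_mem_span b
  have hmul : ∀ u : Λg m, ∀ w ∈ S, u * w ∈ S := by
    intro u
    induction u using ExteriorAlgebra.induction with
    | algebraMap r =>
      intro w hw
      rw [Algebra.algebraMap_eq_smul_one, smul_mul_assoc, one_mul]
      exact smul_mem _ _ hw
    | ι v => exact hι v
    | mul a b ha hb => intro w hw; rw [mul_assoc]; exact ha _ (hb w hw)
    | add a b ha hb => intro w hw; rw [add_mul]; exact add_mem (ha w hw) (hb w hw)
  have h1 : (1 : Λg m) ∈ S :=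
    subset_span ⟨⟨([], []), .nil, .nil⟩, by simp [monoFamily, mono]⟩
  exact eq_top_iff.2 fun u _ => by simpa using hmul u 1 h1

/-! ### The twisted differential on monomials -/

theorem d_generator (hm : m ≠ 0) (d : Λg m →ₗ[ℂ] Λg m)
    (hdx : ∀ a : Fin (m + 1),
      d (x m a) = (((1 - ((a : ℕ) : ℝ)) / m : ℝ) : ℂ) • (x m 0 * x m a))
    (hdy0 : d (y m 0) = -(x m 0 * y m 0))
    (hdy : ∀ b : Fin (m + 1), 1 ≤ (b : ℕ) →
      d (y m b) = ((((b : ℕ) : ℝ) / m : ℝ) : ℂ) • (x m 0 * y m b))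
    (i : Fin (m + 1) ⊕ Fin (m + 1)) :
    d (ExteriorAlgebra.ι ℂ (Pi.single i 1)) = ((Sum.elim (wx m) (wy m) i / m : ℝ) : ℂ) •
      (x m 0 * ExteriorAlgebra.ι ℂ (Pi.single i 1)) := by
  rcases i with a | b
  · change d (x m a) = _ • (x m 0 * x m a)
    rw [hdx a]
    rcases Nat.lt_or_ge (a : ℕ) 2 with ha | ha
    · interval_cases h : (a : ℕ)
      · rw [show a = 0 from Fin.ext h, x, ExteriorAlgebra.ι_sq_zero, smul_zero, smul_zero]
      · simp [wx, h]
    · simp only [wx, Sum.elim_inl, if_neg (by omega : ¬(a : ℕ) ≤ 1)]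
      congr 3; ring
  · change d (y m b) = _ • (x m 0 * y m b)
    rcases Nat.eq_zero_or_pos (b : ℕ) with hb | hb
    · rw [show b = 0 from Fin.ext hb, hdy0]
      simp [wy, hm]
    · rw [hdy b hb]
      simp [wy, hb.ne']

theorem d_mono (d : Λg m →ₗ[ℂ] Λg m) (hd1 : d 1 = 0)
    (hleib : ∀ (v : (Fin (m + 1) ⊕ Fin (m + 1)) → ℂ) (b : Λg m),
      d (ExteriorAlgebra.ι ℂ v * b)
        = d (ExteriorAlgebra.ι ℂ v) * b - ExteriorAlgebra.ι ℂ v * d b)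
    (hgen : ∀ i : Fin (m + 1) ⊕ Fin (m + 1),
      d (ExteriorAlgebra.ι ℂ (Pi.single i 1)) = ((Sum.elim (wx m) (wy m) i / m : ℝ) : ℂ) •
        (x m 0 * ExteriorAlgebra.ι ℂ (Pi.single i 1)))
    (as bs : List (Fin (m + 1))) :
    d (mono m as bs) = ((W m as bs / m : ℝ) : ℂ) • (x m 0 * mono m as bs) := by
  set l := as.map Sum.inl ++ bs.map Sum.inr
  have hmono : mono m as bs = (l.map (ExteriorAlgebra.ι ℂ ∘ fun i => Pi.single i 1)).prod := by
    simp only [l, mono, List.map_append, List.map_map, List.prod_append]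
    rfl
  have hW : ∀ l : List (Fin (m + 1) ⊕ Fin (m + 1)),
      (l.map fun i => ((Sum.elim (wx m) (wy m) i / m : ℝ) : ℂ)).sum
        = (((l.map (Sum.elim (wx m) (wy m))).sum / m : ℝ) : ℂ) := by
    intro l
    induction l with
    | nil => simp
    | cons i l ih => simp only [List.map_cons, List.sum_cons, ih]; push_cast; ring
  rw [hmono, antiderivation_list_prod d hd1 hleib (Pi.single (Sum.inl 0) 1) _ _ hgen, hW]
  congr 3
  simp [l, W, Function.comp_def]

noncomputable def twistCoeff (m : ℕ) (k : ℝ) (i : MonoIndex m) : ℂ :=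
  ((i.weight - k) / m : ℝ)

theorem twisted_apply_monoFamily (d : Λg m →ₗ[ℂ] Λg m)
    (hd : ∀ as bs, d (mono m as bs) = ((W m as bs / m : ℝ) : ℂ) • (x m 0 * mono m as bs))
    (k : ℝ) (i : MonoIndex m) :
    (d - (k : ℂ) • LinearMap.mulLeft ℂ ((1 / (m : ℂ)) • x m 0)) (monoFamily m i)
      = twistCoeff m k i • (x m 0 * monoFamily m i) := by
  rw [LinearMap.sub_apply, monoFamily, hd, LinearMap.smul_apply, LinearMap.mulLeft_apply,
    smul_mul_assoc, smul_smul, ← sub_smul, twistCoeff, MonoIndex.weight]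
  push_cast
  ring_nf

theorem twistCoeff_consZero (k : ℝ) (i : MonoIndex m) (h : 0 ∉ i.1.1) :
    twistCoeff m k (i.consZero h) = twistCoeff m k i := by
  rw [twistCoeff, twistCoeff, i.weight_consZero]

theorem conj_twistCoeff (k : ℝ) (i : MonoIndex m) :
    starRingEnd ℂ (twistCoeff m k i) = twistCoeff m k i :=
  Complex.conj_ofReal _

theorem twistCoeff_eq_zero_iff (hm : m ≠ 0) (k : ℝ) (i : MonoIndex m) :
    twistCoeff m k i = 0 ↔ i.weight = k := by
  simp [twistCoeff, hm, sub_eq_zero]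

/-! ### Orthonormality, the adjoint and the Laplacian -/

def MonoOrthonormal (B : Λg m →ₗ⋆[ℂ] Λg m →ₗ[ℂ] ℂ) : Prop :=
  ∀ i j : MonoIndex m, B (monoFamily m i) (monoFamily m j) = if i = j then 1 else 0

namespace MonoOrthonormal

variable {B : Λg m →ₗ⋆[ℂ] Λg m →ₗ[ℂ] ℂ}

theorem linearIndependent (hB : MonoOrthonormal B) : LinearIndependent ℂ (monoFamily m) :=
  LinearMap.linearIndependent_of_isOrthoᵢ (B := B)
    (LinearMap.isOrthoᵢ_def.2 fun i j hij => by simp [hB i j, hij])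
    (fun i => by simp [hB i i])

noncomputable def basis (hB : MonoOrthonormal B) : Basis (MonoIndex m) ℂ (Λg m) :=
  .mk hB.linearIndependent span_range_monoFamily.ge

theorem coe_basis (hB : MonoOrthonormal B) : ⇑hB.basis = monoFamily m :=
  funext (Basis.mk_apply _ _)

theorem ext (hB : MonoOrthonormal B) {u v : Λg m}
    (h : ∀ j, B u (monoFamily m j) = B v (monoFamily m j)) : u = v :=
  hB.basis.ext_of_orthonormal B (by rw [coe_basis]; exact hB) (by rw [coe_basis]; exact h)

theorem x_zero_mul_monoFamily_eq_zero_iff (hB : MonoOrthonormal B) (i : MonoIndex m) :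
    x m 0 * monoFamily m i = 0 ↔ 0 ∈ i.1.1 := by
  rw [x_zero_mul_monoFamily]
  split_ifs with h
  · simp [h]
  · simp [h, hB.linearIndependent.ne_zero]

variable {Dk Ds : Λg m →ₗ[ℂ] Λg m} {k : ℝ}

theorem adjoint_apply_monoFamily_of_zero_not_mem (hB : MonoOrthonormal B)
    (hDk : ∀ i, Dk (monoFamily m i) = twistCoeff m k i • (x m 0 * monoFamily m i))
    (hadj : ∀ a b, B (Ds a) b = B a (Dk b)) {i : MonoIndex m} (h : 0 ∉ i.1.1) :
    Ds (monoFamily m i) = 0 := by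
  refine hB.ext fun j => ?_
  rw [hadj, hDk, x_zero_mul_monoFamily, map_zero, LinearMap.zero_apply]
  split_ifs with hj
  · simp
  · rw [map_smul, hB, if_neg (by rintro rfl; exact h (List.mem_cons_self ..)), smul_zero]

theorem adjoint_apply_monoFamily_consZero (hB : MonoOrthonormal B)
    (hDk : ∀ i, Dk (monoFamily m i) = twistCoeff m k i • (x m 0 * monoFamily m i))
    (hadj : ∀ a b, B (Ds a) b = B a (Dk b)) (i : MonoIndex m) (h : 0 ∉ i.1.1) :
    Ds (monoFamily m (i.consZero h)) = twistCoeff m k i • monoFamily m i := by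
  refine hB.ext fun j => ?_
  rw [hadj, hDk, map_smul, map_smulₛₗ, LinearMap.smul_apply, hB, conj_twistCoeff,
    x_zero_mul_monoFamily]
  split_ifs with hj hij hij
  · exact absurd (hij ▸ hj) h
  · simp
  · subst hij; rw [hB, if_pos rfl, smul_eq_mul, mul_one]
  · rw [hB, if_neg (mt MonoIndex.consZero_inj.1 hij), smul_zero, smul_zero]

theorem laplacian_apply_monoFamily (hB : MonoOrthonormal B)
    (hDk : ∀ i, Dk (monoFamily m i) = twistCoeff m k i • (x m 0 * monoFamily m i))
    (hadj : ∀ a b, B (Ds a) b = B a (Dk b)) (i : MonoIndex m) :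
    (Dk ∘ₗ Ds + Ds ∘ₗ Dk) (monoFamily m i) = twistCoeff m k i ^ 2 • monoFamily m i := by
  rw [LinearMap.add_apply, LinearMap.comp_apply, LinearMap.comp_apply, hDk i,
    x_zero_mul_monoFamily]
  split_ifs with h
  · obtain ⟨i', h', rfl⟩ := i.exists_consZero_eq h
    rw [smul_zero, map_zero, add_zero, hB.adjoint_apply_monoFamily_consZero hDk hadj,
      map_smul, hDk, x_zero_mul_monoFamily, dif_neg h', twistCoeff_consZero, smul_smul, sq]
  · rw [hB.adjoint_apply_monoFamily_of_zero_not_mem hDk hadj h, map_zero, zero_add, map_smul,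
      hB.adjoint_apply_monoFamily_consZero hDk hadj, smul_smul, sq]

theorem apply_eq_zero_of_disjoint (hB : MonoOrthonormal B) {s t : Set (MonoIndex m)}
    (hst : Disjoint s t) :
    ∀ a ∈ span ℂ (monoFamily m '' s), ∀ b ∈ span ℂ (monoFamily m '' t), B a b = 0 :=
  B.apply_eq_zero_of_mem_span <| by
    rintro _ ⟨i, hi, rfl⟩ _ ⟨j, hj, rfl⟩
    rw [hB, if_neg (hst.ne_of_mem hi hj)]

end MonoOrthonormal

/-! ### The spaces of the decomposition as spans of monomials -/

namespace MonoIndex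

/-- the indices of `A^j_k` -/
def harmonicSet (j : ℤ) (k : ℝ) : Set (MonoIndex m) := {i | i.degree = j ∧ i.weight = k}

/-- the indices of `x^1 ∧ Â^{j-1}_k` -/
def exactSet (j : ℤ) (k : ℝ) : Set (MonoIndex m) :=
  {i | i.degree = j ∧ i.weight ≠ k ∧ 0 ∈ i.1.1}

/-- the indices of `Â^j_k` -/
def coexactSet (j : ℤ) (k : ℝ) : Set (MonoIndex m) :=
  {i | i.degree = j ∧ i.weight ≠ k ∧ 0 ∉ i.1.1}

variable {j : ℤ} {k : ℝ}

theorem disjoint_harmonicSet_exactSet :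
    Disjoint (harmonicSet (m := m) j k) (exactSet j k) :=
  disjoint_left.2 fun _ hA hX => hX.2.1 hA.2

theorem disjoint_harmonicSet_coexactSet :
    Disjoint (harmonicSet (m := m) j k) (coexactSet j k) :=
  disjoint_left.2 fun _ hA hH => hH.2.1 hA.2

theorem disjoint_exactSet_coexactSet :
    Disjoint (exactSet (m := m) j k) (coexactSet j k) :=
  disjoint_left.2 fun _ hX hH => hH.2.2 hX.2.2

theorem harmonicSet_union_exactSet_union_coexactSet :
    harmonicSet j k ∪ exactSet j k ∪ coexactSet j k = {i : MonoIndex m | i.degree = j} := by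
  ext i
  simp only [harmonicSet, exactSet, coexactSet, mem_union, mem_ofPred_eq]
  tauto

end MonoIndex

open MonoIndex

theorem deg_eq_span (j : ℤ) : deg m j = span ℂ (monoFamily m '' {i | i.degree = j}) := by
  rw [deg]
  congr 1
  ext γ
  constructor
  · rintro ⟨as, bs, has, hbs, hj, rfl⟩
    exact ⟨⟨(as, bs), has, hbs⟩, hj, rfl⟩
  · rintro ⟨⟨⟨as, bs⟩, has, hbs⟩, hj, rfl⟩
    exact ⟨as, bs, has, hbs, hj, rfl⟩

theorem Aw_eq_span (j : ℤ) (k : ℝ) : Aw m j k = span ℂ (monoFamily m '' harmonicSet j k) := by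
  rw [Aw]
  congr 1
  ext γ
  constructor
  · rintro ⟨as, bs, has, hbs, hj, hW, rfl⟩
    exact ⟨⟨(as, bs), has, hbs⟩, ⟨hj, hW⟩, rfl⟩
  · rintro ⟨⟨⟨as, bs⟩, has, hbs⟩, ⟨hj, hW⟩, rfl⟩
    exact ⟨as, bs, has, hbs, hj, hW, rfl⟩

namespace MonoOrthonormal

variable {B : Λg m →ₗ⋆[ℂ] Λg m →ₗ[ℂ] ℂ}

theorem Ahat_eq_span (hB : MonoOrthonormal B) (j : ℤ) (k : ℝ) :
    Ahat m j k = span ℂ (monoFamily m '' coexactSet j k) := by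
  rw [Ahat]
  congr 1
  ext γ
  constructor
  · rintro ⟨as, bs, has, hbs, hj, hW, hx, rfl⟩
    exact ⟨⟨(as, bs), has, hbs⟩,
      ⟨hj, hW, (hB.x_zero_mul_monoFamily_eq_zero_iff _).not.1 hx⟩, rfl⟩
  · rintro ⟨i, ⟨hj, hW, hx⟩, rfl⟩
    exact ⟨_, _, i.2.1, i.2.2, hj, hW, (hB.x_zero_mul_monoFamily_eq_zero_iff i).not.2 hx, rfl⟩

theorem map_Ahat_eq_span (hB : MonoOrthonormal B) (j : ℤ) (k : ℝ) :
    map (LinearMap.mulLeft ℂ (x m 0)) (Ahat m (j - 1) k)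
      = span ℂ (monoFamily m '' exactSet j k) := by
  rw [hB.Ahat_eq_span, map_span, image_image]
  congr 1
  ext γ
  constructor
  · rintro ⟨i, ⟨hj, hW, h0⟩, rfl⟩
    refine ⟨i.consZero h0, ⟨by rw [i.degree_consZero, hj]; ring, by rwa [i.weight_consZero],
      List.mem_cons_self ..⟩, ?_⟩
    dsimp only
    rw [LinearMap.mulLeft_apply, x_zero_mul_monoFamily, dif_neg h0]
  · rintro ⟨i, ⟨hj, hW, h0⟩, rfl⟩
    obtain ⟨i, h0', rfl⟩ := i.exists_consZero_eq h0
    rw [i.degree_consZero] at hj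
    refine ⟨i, ⟨by omega, by rwa [i.weight_consZero] at hW, h0'⟩, ?_⟩
    dsimp only
    rw [LinearMap.mulLeft_apply, x_zero_mul_monoFamily, dif_neg h0']

/-! ### The Hodge decomposition -/

theorem deg_eq_sup (hB : MonoOrthonormal B) (k : ℝ) (j : ℤ) :
    deg m j
      = Aw m j k ⊔ map (LinearMap.mulLeft ℂ (x m 0)) (Ahat m (j - 1) k) ⊔ Ahat m j k := by
  rw [deg_eq_span, Aw_eq_span, hB.map_Ahat_eq_span, hB.Ahat_eq_span, ← span_union, ← span_union,
    ← image_union, ← image_union, harmonicSet_union_exactSet_union_coexactSet]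

theorem Aw_inf_map_Ahat (hB : MonoOrthonormal B) (k : ℝ) (j : ℤ) :
    Aw m j k ⊓ map (LinearMap.mulLeft ℂ (x m 0)) (Ahat m (j - 1) k) = ⊥ := by
  rw [Aw_eq_span, hB.map_Ahat_eq_span]
  exact (hB.linearIndependent.disjoint_span_image disjoint_harmonicSet_exactSet).eq_bot

theorem sup_inf_Ahat (hB : MonoOrthonormal B) (k : ℝ) (j : ℤ) :
    (Aw m j k ⊔ map (LinearMap.mulLeft ℂ (x m 0)) (Ahat m (j - 1) k)) ⊓ Ahat m j k = ⊥ := by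
  rw [Aw_eq_span, hB.map_Ahat_eq_span, hB.Ahat_eq_span, ← span_union, ← image_union]
  exact (hB.linearIndependent.disjoint_span_image
    (disjoint_harmonicSet_coexactSet.union_left disjoint_exactSet_coexactSet)).eq_bot

theorem Aw_orthogonal_map_Ahat (hB : MonoOrthonormal B) (k : ℝ) (j : ℤ) :
    ∀ a ∈ Aw m j k, ∀ b ∈ map (LinearMap.mulLeft ℂ (x m 0)) (Ahat m (j - 1) k),
      B a b = 0 := by
  rw [Aw_eq_span, hB.map_Ahat_eq_span]
  exact hB.apply_eq_zero_of_disjoint disjoint_harmonicSet_exactSet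

theorem Aw_orthogonal_Ahat (hB : MonoOrthonormal B) (k : ℝ) (j : ℤ) :
    ∀ a ∈ Aw m j k, ∀ b ∈ Ahat m j k, B a b = 0 := by
  rw [Aw_eq_span, hB.Ahat_eq_span]
  exact hB.apply_eq_zero_of_disjoint disjoint_harmonicSet_coexactSet

theorem map_Ahat_orthogonal_Ahat (hB : MonoOrthonormal B) (k : ℝ) (j : ℤ) :
    ∀ a ∈ map (LinearMap.mulLeft ℂ (x m 0)) (Ahat m (j - 1) k), ∀ b ∈ Ahat m j k,
      B a b = 0 := by
  rw [hB.map_Ahat_eq_span, hB.Ahat_eq_span]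
  exact hB.apply_eq_zero_of_disjoint disjoint_exactSet_coexactSet

theorem ker_laplacian_inf_deg {Dk Ds : Λg m →ₗ[ℂ] Λg m} {k : ℝ} (hB : MonoOrthonormal B)
    (hm : m ≠ 0)
    (hDk : ∀ i, Dk (monoFamily m i) = twistCoeff m k i • (x m 0 * monoFamily m i))
    (hadj : ∀ a b, B (Ds a) b = B a (Dk b)) (j : ℤ) :
    LinearMap.ker (Dk ∘ₗ Ds + Ds ∘ₗ Dk) ⊓ deg m j = Aw m j k := by
  rw [deg_eq_span, Aw_eq_span, ← hB.coe_basis,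
    hB.basis.ker_inf_span_image_of_apply_eq_smul (fun i => twistCoeff m k i ^ 2)
      (fun i => by rw [hB.coe_basis]; exact hB.laplacian_apply_monoFamily hDk hadj i)]
  congr 2
  ext i
  simp [harmonicSet, twistCoeff_eq_zero_iff hm]

theorem map_twisted_deg {Dk : Λg m →ₗ[ℂ] Λg m} {k : ℝ} (hB : MonoOrthonormal B)
    (hm : m ≠ 0)
    (hDk : ∀ i, Dk (monoFamily m i) = twistCoeff m k i • (x m 0 * monoFamily m i)) (j : ℤ) :
    map Dk (deg m (j - 1)) = map (LinearMap.mulLeft ℂ (x m 0)) (Ahat m (j - 1) k) := by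
  rw [deg_eq_span, hB.Ahat_eq_span, map_span, map_span, image_image, image_image]
  simp only [hDk, LinearMap.mulLeft_apply]
  rw [span_image_smul_eq, ← span_image_ne_zero]
  congr 2
  ext i
  simp [coexactSet, twistCoeff_eq_zero_iff hm, hB.x_zero_mul_monoFamily_eq_zero_iff, and_assoc]

theorem map_adjoint_deg {Dk Ds : Λg m →ₗ[ℂ] Λg m} {k : ℝ} (hB : MonoOrthonormal B)
    (hm : m ≠ 0)
    (hDk : ∀ i, Dk (monoFamily m i) = twistCoeff m k i • (x m 0 * monoFamily m i))
    (hadj : ∀ a b, B (Ds a) b = B a (Dk b)) (j : ℤ) :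
    map Ds (deg m (j + 1)) = Ahat m j k := by
  have himage : map Ds (deg m (j + 1)) = span ℂ ((fun i => twistCoeff m k i • monoFamily m i) ''
      {i | i.degree = j ∧ 0 ∉ i.1.1}) := by
    rw [deg_eq_span, map_span, image_image]
    apply le_antisymm <;> rw [span_le] <;> rintro _ ⟨i, hi, rfl⟩ <;> dsimp only
    · by_cases h0 : 0 ∈ i.1.1
      · obtain ⟨i, h0', rfl⟩ := i.exists_consZero_eq h0
        rw [hB.adjoint_apply_monoFamily_consZero hDk hadj]
        refine subset_span ⟨i, ⟨?_, h0'⟩, rfl⟩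
        rw [mem_ofPred_eq, i.degree_consZero] at hi
        omega
      · rw [hB.adjoint_apply_monoFamily_of_zero_not_mem hDk hadj h0]
        exact zero_mem _
    · rw [← hB.adjoint_apply_monoFamily_consZero hDk hadj i hi.2]
      exact subset_span ⟨i.consZero hi.2, by rw [mem_ofPred_eq, i.degree_consZero, hi.1], rfl⟩
  rw [himage, span_image_smul_eq, hB.Ahat_eq_span]
  congr 2
  ext i
  simp [coexactSet, twistCoeff_eq_zero_iff hm]
  tauto

end MonoOrthonormal

end SolvCE

open SolvCE in
/-- For each `m ≥ 2`, `k ∈ ℝ` and `0 ≤ j ≤ 2m+2`, the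
twisted complex `(⋀^•(g_m^* ⊗ ℂ), d_k)`, with the inner product `ip` making
the monomial basis orthonormal and with `d_k^*` the adjoint of `d_k`, has the
orthogonal Hodge decomposition `⋀^j = A^j_k ⊕ x^1∧Â^{j-1}_k ⊕ Â^j_k`;
moreover `ker(Δ_k) ∩ ⋀^j = A^j_k`, `d_k(⋀^{j-1}) = x^1∧Â^{j-1}_k` and
`d_k^*(⋀^{j+1}) = Â^j_k`, where `Δ_k = d_k d_k^* + d_k^* d_k`. -/
theorem solvmanifold_hodge_decomposition (m : ℕ) (hm : 2 ≤ m)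
    (d : Λg m →ₗ[ℂ] Λg m)
    -- `d` is an antiderivation:
    (hd1 : d 1 = 0)
    (hleib : ∀ (v : (Fin (m + 1) ⊕ Fin (m + 1)) → ℂ) (b : Λg m),
      d (ExteriorAlgebra.ι ℂ v * b)
        = d (ExteriorAlgebra.ι ℂ v) * b - ExteriorAlgebra.ι ℂ v * d b)
    -- the Chevalley–Eilenberg structure equations of `g_m`:
    (hdx : ∀ a : Fin (m + 1),
      d (x m a) = (((1 - ((a : ℕ) : ℝ)) / m : ℝ) : ℂ) • (x m 0 * x m a))
    (hdy0 : d (y m 0) = -(x m 0 * y m 0))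
    (hdy : ∀ b : Fin (m + 1), 1 ≤ (b : ℕ) →
      d (y m b) = ((((b : ℕ) : ℝ) / m : ℝ) : ℂ) • (x m 0 * y m b))
    -- the hermitian inner product making the monomial basis orthonormal:
    (ip : Λg m → Λg m → ℂ)
    (ip_addl : ∀ a b c, ip (a + b) c = ip a c + ip b c)
    (ip_addr : ∀ a b c, ip a (b + c) = ip a b + ip a c)
    (ip_smull : ∀ (μ : ℂ) a b, ip (μ • a) b = starRingEnd ℂ μ * ip a b)
    (ip_smulr : ∀ (μ : ℂ) a b, ip a (μ • b) = μ * ip a b)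
    (ip_ortho : ∀ as bs cs ds : List (Fin (m + 1)),
      as.Pairwise (· < ·) → bs.Pairwise (· < ·) →
      cs.Pairwise (· < ·) → ds.Pairwise (· < ·) →
      ip (mono m as bs) (mono m cs ds)
        = if as = cs ∧ bs = ds then 1 else 0)
    -- the adjoints `d_k^*` of the twisted differentials
    -- `d_k = d - k θ∧·`, `θ = (1/m) x^1`:
    (dstar : ℝ → Λg m →ₗ[ℂ] Λg m)
    (hadj : ∀ (k : ℝ) (a b : Λg m),
      ip (dstar k a) b
        = ip a ((d - (k : ℂ) • LinearMap.mulLeft ℂ ((1 / (m : ℂ)) • x m 0)) b)) :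
    ∀ (k : ℝ) (j : ℤ), 0 ≤ j → j ≤ 2 * m + 2 →
      -- the decomposition `⋀^j = A^j_k ⊕ x^1∧Â^{j-1}_k ⊕ Â^j_k` …
      deg m j
        = Aw m j k ⊔ Submodule.map (LinearMap.mulLeft ℂ (x m 0)) (Ahat m (j - 1) k)
            ⊔ Ahat m j k ∧
      -- … is direct …
      Aw m j k ⊓ Submodule.map (LinearMap.mulLeft ℂ (x m 0)) (Ahat m (j - 1) k) = ⊥ ∧
      (Aw m j k ⊔ Submodule.map (LinearMap.mulLeft ℂ (x m 0)) (Ahat m (j - 1) k))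
          ⊓ Ahat m j k = ⊥ ∧
      -- … and orthogonal:
      (∀ a ∈ Aw m j k,
        ∀ b ∈ Submodule.map (LinearMap.mulLeft ℂ (x m 0)) (Ahat m (j - 1) k),
          ip a b = 0) ∧
      (∀ a ∈ Aw m j k, ∀ b ∈ Ahat m j k, ip a b = 0) ∧
      (∀ a ∈ Submodule.map (LinearMap.mulLeft ℂ (x m 0)) (Ahat m (j - 1) k),
        ∀ b ∈ Ahat m j k, ip a b = 0) ∧
      -- `ker(Δ_k) ∩ ⋀^j = A^j_k`:
      LinearMap.ker
          ((d - (k : ℂ) • LinearMap.mulLeft ℂ ((1 / (m : ℂ)) • x m 0)) ∘ₗ dstar k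
            + dstar k ∘ₗ
              (d - (k : ℂ) • LinearMap.mulLeft ℂ ((1 / (m : ℂ)) • x m 0)))
          ⊓ deg m j
        = Aw m j k ∧
      -- `d_k(⋀^{j-1}) = x^1 ∧ Â^{j-1}_k`:
      Submodule.map (d - (k : ℂ) • LinearMap.mulLeft ℂ ((1 / (m : ℂ)) • x m 0))
          (deg m (j - 1))
        = Submodule.map (LinearMap.mulLeft ℂ (x m 0)) (Ahat m (j - 1) k) ∧
      -- `d_k^*(⋀^{j+1}) = Â^j_k`:
      Submodule.map (dstar k) (deg m (j + 1)) = Ahat m j k := by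
  intro k j _ _
  have hm0 : m ≠ 0 := by omega
  let B : Λg m →ₗ⋆[ℂ] Λg m →ₗ[ℂ] ℂ :=
    LinearMap.mk₂'ₛₗ _ _ ip ip_addl ip_smull ip_addr ip_smulr
  have hB : MonoOrthonormal B := fun i j =>
    (ip_ortho _ _ _ _ i.2.1 i.2.2 j.2.1 j.2.2).trans (by simp [Subtype.ext_iff, Prod.ext_iff])
  have hDk := twisted_apply_monoFamily d (d_mono d hd1 hleib (d_generator hm0 d hdx hdy0 hdy)) k
  exact ⟨hB.deg_eq_sup k j, hB.Aw_inf_map_Ahat k j, hB.sup_inf_Ahat k j,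
    hB.Aw_orthogonal_map_Ahat k j, hB.Aw_orthogonal_Ahat k j, hB.map_Ahat_orthogonal_Ahat k j,
    hB.ker_laplacian_inf_deg hm0 hDk (hadj k) j, hB.map_twisted_deg hm0 hDk j,
    hB.map_adjoint_deg hm0 hDk (hadj k) j⟩
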